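/- (Chen–Sagan Lucas analogue mod 2) Write every natural number n uniquely in the base 𝐅 = (1, 3, 3·2, 3·2², …) as n = n_0 + 3·(n_1 + n_2·2 + n_3·2² + ⋯) with 0 ≤ n_0 < 3 and 0 ≤ n_i < 2 for i ≥ 1, and similarly k = k_0 + 3·(k_1 + k_2·2 + ⋯). Then C(n,k)_F ≡ C(n_0,k_0)_F · C(n_1,k_1)_F · C(n_2,k_2)_F ⋯ (mod 2), where all but finitely many factors equal 1. -/
import Mathlib

/-- The fibotorial `n!_F = F_n · F_{n-1} ⋯ F_1`, with `0!_F = 1`. -/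
def fibotorial (n : ℕ) : ℕ := ∏ i ∈ Finset.range n, Nat.fib (i + 1)

/-- The fibonomial coefficient `C(n,k)_F = n!_F / (k!_F · (n-k)!_F)` for `k ≤ n`,
and `0` otherwise. -/
def fibnomial (n k : ℕ) : ℕ :=
  if k ≤ n then fibotorial n / (fibotorial k * fibotorial (n - k)) else 0

/-- Recursive version of the fibonomial coefficient. -/
def fibC : ℕ → ℕ → ℕ
  | _, 0 => 1
  | 0, _ + 1 => 0
  | n + 1, k + 1 => Nat.fib (n - k + 1) * fibC n k + Nat.fib k * fibC n (k + 1)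

lemma fibotorial_pos (n : ℕ) : 0 < fibotorial n := by
  unfold fibotorial
  exact Finset.prod_pos fun i _ => Nat.fib_pos.2 (Nat.succ_pos i)

lemma fibotorial_succ (n : ℕ) : fibotorial (n + 1) = Nat.fib (n + 1) * fibotorial n := by
  unfold fibotorial
  rw [Finset.prod_range_succ, mul_comm]

lemma fibC_eq_zero {n k : ℕ} (h : n < k) : fibC n k = 0 := by
  induction n generalizing k with
  | zero => cases k with
    | zero => omega
    | succ k => rfl
  | succ n ih =>
    cases k with
    | zero => omega
    | succ k =>
      show Nat.fib (n - k + 1) * fibC n k + Nat.fib k * fibC n (k + 1) = 0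
      rw [ih (by omega), ih (by omega)]
      ring

lemma fibC_mul (n : ℕ) : ∀ k, k ≤ n →
    fibC n k * (fibotorial k * fibotorial (n - k)) = fibotorial n := by
  induction n with
  | zero => intro k hk; interval_cases k; simp [fibC, fibotorial]
  | succ n ih =>
    intro k hk
    cases k with
    | zero => simp [fibC, fibotorial]
    | succ k =>
      have hk' : k ≤ n := by omega
      show (Nat.fib (n - k + 1) * fibC n k + Nat.fib k * fibC n (k + 1)) *
        (fibotorial (k + 1) * fibotorial (n + 1 - (k + 1))) = fibotorial (n + 1)
      have h1 : n + 1 - (k + 1) = n - k := by omega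
      have hsecond : Nat.fib k * fibC n (k + 1) * (fibotorial (k + 1) * fibotorial (n - k)) =
          Nat.fib k * Nat.fib (n - k) * fibotorial n := by
        rcases eq_or_lt_of_le hk' with rfl | hlt
        · rw [fibC_eq_zero (by omega)]
          simp
        · have h2 : n - k = (n - (k + 1)) + 1 := by omega
          rw [h2, fibotorial_succ (n - (k + 1)), ← h2]
          have := ih (k + 1) (by omega)
          calc Nat.fib k * fibC n (k + 1) *
                (fibotorial (k + 1) * (Nat.fib (n - k) * fibotorial (n - (k + 1))))
              = Nat.fib k * Nat.fib (n - k) *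
                (fibC n (k + 1) * (fibotorial (k + 1) * fibotorial (n - (k + 1)))) := by ring
            _ = Nat.fib k * Nat.fib (n - k) * fibotorial n := by rw [this]
      rw [h1, add_mul, fibotorial_succ k]
      have hfirst : Nat.fib (n - k + 1) * fibC n k *
          (Nat.fib (k + 1) * fibotorial k * fibotorial (n - k)) =
          Nat.fib (k + 1) * Nat.fib (n - k + 1) * fibotorial n := by
        calc Nat.fib (n - k + 1) * fibC n k * (Nat.fib (k + 1) * fibotorial k * fibotorial (n - k))
            = Nat.fib (k + 1) * Nat.fib (n - k + 1) *
              (fibC n k * (fibotorial k * fibotorial (n - k))) := by ring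
          _ = Nat.fib (k + 1) * Nat.fib (n - k + 1) * fibotorial n := by rw [ih k hk']
      rw [hfirst]
      rw [show Nat.fib (k + 1) * fibotorial k * fibotorial (n - k) =
        fibotorial (k + 1) * fibotorial (n - k) by rw [fibotorial_succ]]
      rw [hsecond]
      have hfib : Nat.fib (k + 1) * Nat.fib (n - k + 1) + Nat.fib k * Nat.fib (n - k) =
          Nat.fib (n + 1) := by
        have := Nat.fib_add k (n - k)
        rw [show k + (n - k) = n by omega] at this
        omega
      calc Nat.fib (k + 1) * Nat.fib (n - k + 1) * fibotorial n +
            Nat.fib k * Nat.fib (n - k) * fibotorial n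
          = (Nat.fib (k + 1) * Nat.fib (n - k + 1) + Nat.fib k * Nat.fib (n - k)) *
            fibotorial n := by ring
        _ = Nat.fib (n + 1) * fibotorial n := by rw [hfib]
        _ = fibotorial (n + 1) := (fibotorial_succ n).symm

lemma fibnomial_eq_fibC (n k : ℕ) : fibnomial n k = fibC n k := by
  unfold fibnomial
  split
  · next h =>
    rw [← fibC_mul n k h,
      Nat.mul_div_cancel _ (Nat.mul_pos (fibotorial_pos _) (fibotorial_pos _))]
  · next h => rw [fibC_eq_zero (by omega)]

lemma fib_mod_two (m : ℕ) : Nat.fib m % 2 = if m % 3 = 0 then 0 else 1 := by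
  induction m using Nat.strong_induction_on with
  | _ m ih =>
    match m with
    | 0 => decide
    | 1 => decide
    | 2 => decide
    | (m + 3) =>
      have h1 : Nat.fib (m + 3) = Nat.fib (m + 1) + Nat.fib (m + 2) := Nat.fib_add_two
      have h2 : Nat.fib (m + 2) = Nat.fib m + Nat.fib (m + 1) := Nat.fib_add_two
      have := ih m (by omega)
      have hmod : (m + 3) % 3 = m % 3 := by omega
      rw [hmod]
      omega

lemma fib_modeq (m : ℕ) : Nat.fib m ≡ (if m % 3 = 0 then 0 else 1) [MOD 2] := by
  unfold Nat.ModEq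
  rw [fib_mod_two]
  split <;> rfl

/-- Auxiliary indicator form of the fibonomial mod 2. -/
def gaux (n k : ℕ) : ℕ := (if k % 3 ≤ n % 3 then 1 else 0) * Nat.choose (n / 3) (k / 3)

lemma gaux_eq_zero {n k : ℕ} (h : n < k) : gaux n k = 0 := by
  unfold gaux
  by_cases h3 : n / 3 < k / 3
  · rw [Nat.choose_eq_zero_of_lt h3, mul_zero]
  · have : ¬ k % 3 ≤ n % 3 := by omega
    rw [if_neg this, zero_mul]

lemma fibC_modeq (n : ℕ) : ∀ k, fibC n k ≡ gaux n k [MOD 2] := by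
  induction n with
  | zero =>
    intro k
    cases k with
    | zero => rfl
    | succ k => rw [fibC_eq_zero (by omega), gaux_eq_zero (by omega)]
  | succ n ih =>
    intro k
    cases k with
    | zero =>
      show (1 : ℕ) ≡ gaux (n + 1) 0 [MOD 2]
      unfold gaux
      simp
      rfl
    | succ k =>
      show Nat.fib (n - k + 1) * fibC n k + Nat.fib k * fibC n (k + 1) ≡
        gaux (n + 1) (k + 1) [MOD 2]
      by_cases hkn : k ≤ n
      · have H : Nat.fib (n - k + 1) * fibC n k + Nat.fib k * fibC n (k + 1) ≡
            (if (n - k + 1) % 3 = 0 then 0 else 1) * gaux n k +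
            (if k % 3 = 0 then 0 else 1) * gaux n (k + 1) [MOD 2] :=
          Nat.ModEq.add (Nat.ModEq.mul (fib_modeq _) (ih k))
            (Nat.ModEq.mul (fib_modeq _) (ih (k + 1)))
        refine H.trans ?_
        unfold gaux Nat.ModEq
        rcases (by omega : n % 3 = 0 ∨ n % 3 = 1 ∨ n % 3 = 2) with hr | hr | hr <;>
          rcases (by omega : k % 3 = 0 ∨ k % 3 = 1 ∨ k % 3 = 2) with hs | hs | hs
        · rw [(by omega : (n - k + 1) % 3 = 1), (by omega : (n + 1) % 3 = 1),
            (by omega : (k + 1) % 3 = 1), (by omega : (n + 1) / 3 = n / 3),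
            (by omega : (k + 1) / 3 = k / 3), hr, hs]
          norm_num
        · rw [(by omega : (n - k + 1) % 3 = 0), (by omega : (n + 1) % 3 = 1),
            (by omega : (k + 1) % 3 = 2), hr, hs]
          norm_num
        · rw [(by omega : (n - k + 1) % 3 = 2), (by omega : (n + 1) % 3 = 1),
            (by omega : (k + 1) % 3 = 0), (by omega : (n + 1) / 3 = n / 3),
            (by omega : (k + 1) / 3 = k / 3 + 1), hr, hs]
          norm_num
        · rw [(by omega : (n - k + 1) % 3 = 2), (by omega : (n + 1) % 3 = 2),
            (by omega : (k + 1) % 3 = 1), (by omega : (n + 1) / 3 = n / 3),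
            (by omega : (k + 1) / 3 = k / 3), hr, hs]
          norm_num
        · rw [(by omega : (n - k + 1) % 3 = 1), (by omega : (n + 1) % 3 = 2),
            (by omega : (k + 1) % 3 = 2), (by omega : (n + 1) / 3 = n / 3),
            (by omega : (k + 1) / 3 = k / 3), hr, hs]
          norm_num
        · rw [(by omega : (n - k + 1) % 3 = 0), (by omega : (n + 1) % 3 = 2),
            (by omega : (k + 1) % 3 = 0), (by omega : (n + 1) / 3 = n / 3),
            (by omega : (k + 1) / 3 = k / 3 + 1), hr, hs]
          norm_num
        · rw [(by omega : (n - k + 1) % 3 = 0), (by omega : (n + 1) % 3 = 0),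
            (by omega : (k + 1) % 3 = 1), hr, hs]
          norm_num
        · rw [(by omega : (n - k + 1) % 3 = 2), (by omega : (n + 1) % 3 = 0),
            (by omega : (k + 1) % 3 = 2), (by omega : (n + 1) / 3 = n / 3 + 1),
            (by omega : (k + 1) / 3 = k / 3), hr, hs]
          norm_num
          omega
        · rw [(by omega : (n - k + 1) % 3 = 1), (by omega : (n + 1) % 3 = 0),
            (by omega : (k + 1) % 3 = 0), (by omega : (n + 1) / 3 = n / 3 + 1),
            (by omega : (k + 1) / 3 = k / 3 + 1), hr, hs]
          norm_num
          have hp : (n / 3 + 1).choose (k / 3 + 1) =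
              (n / 3).choose (k / 3) + (n / 3).choose (k / 3 + 1) :=
            Nat.choose_succ_succ _ _
          omega
      · rw [fibC_eq_zero (show n < k by omega), fibC_eq_zero (show n < k + 1 by omega),
          gaux_eq_zero (show n + 1 < k + 1 by omega)]
        simp
        rfl

lemma fibnomial_small (r s : ℕ) (hr : r < 3) (hs : s < 3) :
    fibnomial r s = if s ≤ r then 1 else 0 := by
  interval_cases r <;> interval_cases s <;> decide

lemma fibnomial_bit (a b : ℕ) (ha : a < 2) (hb : b < 2) :
    fibnomial a b = Nat.choose a b := by
  interval_cases a <;> interval_cases b <;> decide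

/-- Chen–Sagan Lucas analogue mod 2: writing `n` in the base `𝐅 = (1, 3, 3·2, 3·2², …)`,
with zeroth digit `n % 3` and `(i+1)`-st digit `(n / 3) / 2^i % 2`, the fibonomial
coefficient `C(n,k)_F` is congruent mod 2 to the product of the digitwise fibonomial
coefficients.  Any `N` with `n, k < 3·2^N` covers all nonzero digits (all further
factors are `C(0,0)_F = 1`). -/
theorem fibnomial_lucas_mod_two (n k N : ℕ) (hn : n < 3 * 2 ^ N) (hk : k < 3 * 2 ^ N) :
    fibnomial n k ≡
      fibnomial (n % 3) (k % 3) *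
        ∏ i ∈ Finset.range N,
          fibnomial (n / 3 / 2 ^ i % 2) (k / 3 / 2 ^ i % 2) [MOD 2] := by
  have h1 : fibnomial n k ≡ gaux n k [MOD 2] := by
    rw [fibnomial_eq_fibC]; exact fibC_modeq n k
  refine h1.trans ?_
  have hn3 : n / 3 < 2 ^ N := by omega
  have hk3 : k / 3 < 2 ^ N := by omega
  have hl := Choose.choose_modEq_prod_range_choose_nat (p := 2) hn3 hk3
  have hprod : ∏ i ∈ Finset.range N, fibnomial (n / 3 / 2 ^ i % 2) (k / 3 / 2 ^ i % 2) =
      ∏ i ∈ Finset.range N, Nat.choose (n / 3 / 2 ^ i % 2) (k / 3 / 2 ^ i % 2) :=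
    Finset.prod_congr rfl fun i _ =>
      fibnomial_bit _ _ (Nat.mod_lt _ (by norm_num)) (Nat.mod_lt _ (by norm_num))
  rw [hprod, fibnomial_small _ _ (Nat.mod_lt _ (by norm_num)) (Nat.mod_lt _ (by norm_num))]
  unfold gaux
  exact Nat.ModEq.mul_left _ hl
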